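/- arXiv:1708.08185 — 4 statements merged into one kernel-verified Lean document; each statement's English description precedes it below -/
import Mathlib

section
/- The two-particle function F⁽²⁾(x₁,y₁,x₂,y₂) = (1/4)(x₁y₂ − x₂y₁)² + (c/4)·(x₁² + x₂²)²/(x₁²x₂²) equals (h₁(x₁,y₁)+h₁(x₂,y₂))·(h₃(x₁,y₁)+h₃(x₂,y₂)) − (h₂(x₁,y₁)+h₂(x₂,y₂))², where h₁ = x²/2, h₂ = −xy/2, h₃ = (y² + c/x²)/2. -/
theorem mp_two_particle_invariant (c x₁ y₁ x₂ y₂ : ℝ) (h1 : x₁ ≠ 0) (h2 : x₂ ≠ 0) :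
    (1 / 4) * (x₁ * y₂ - x₂ * y₁) ^ 2 +
      (c / 4) * (x₁ ^ 2 + x₂ ^ 2) ^ 2 / (x₁ ^ 2 * x₂ ^ 2) =
    (x₁ ^ 2 / 2 + x₂ ^ 2 / 2) *
        ((y₁ ^ 2 + c / x₁ ^ 2) / 2 + (y₂ ^ 2 + c / x₂ ^ 2) / 2) -
      (-(x₁ * y₁) / 2 + -(x₂ * y₂) / 2) ^ 2 := by
  field_simp
  ring
end

section
/- The deformed Hamiltonian functions h_{z,1} = x²/2, h_{z,2} = −(1/2)·shc(zx²)·xy, h_{z,3} = (1/2)(shc(zx²)·y² + c/(x²·shc(zx²))) on ℝ²_{x≠0} satisfy the deformed Poisson brackets {h_{z,1},h_{z,2}} = −shc(2z·h_{z,1})·h_{z,1}, {h_{z,1},h_{z,3}} = −2h_{z,2}, {h_{z,2},h_{z,3}} = −cosh(2z·h_{z,1})·h_{z,3} with respect to the canonical Poisson bracket {f,g} = f_x g_y − f_y g_x. -/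
noncomputable def shc (x : ℝ) : ℝ := if x = 0 then 1 else Real.sinh x / x

noncomputable def pbracket (f g : ℝ → ℝ → ℝ) (x y : ℝ) : ℝ :=
  deriv (fun x' => f x' y) x * deriv (fun y' => g x y') y -
    deriv (fun y' => f x y') y * deriv (fun x' => g x' y) x

/-! Everything reduces to one identity: since `u * shc u = sinh u`, the function
`x² shc(z x²)` has `x`-derivative `2x cosh(z x²)` for every `z`
(for `z ≠ 0` it is `sinh(z x²)/z`).
Writing `S = shc(z x²)` and `C = cosh(z x²)`, this gives `∂ₓ S = 2(C - S)/x` and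
`∂ₓ(x S) = 2C - S`, after which each bracket is an algebraic identity in `x, y, S, C`,
using `S > 0` to divide by `x² S`. -/

open Real Filter Topology

lemma mul_shc (u : ℝ) : u * shc u = sinh u := by
  unfold shc
  split_ifs with hu
  · simp [hu]
  · field_simp

lemma shc_pos (u : ℝ) : 0 < shc u := by
  unfold shc
  split_ifs with hu
  · exact one_pos
  · rcases lt_or_gt_of_ne hu with hu | hu
    · exact div_pos_of_neg_of_neg (sinh_neg_iff.2 hu) hu
    · exact div_pos (sinh_pos_iff.2 hu) hu

lemma hasDerivAt_sq_mul_shc_const_mul_sq (z x : ℝ) :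
    HasDerivAt (fun t => t ^ 2 * shc (z * t ^ 2)) (2 * x * cosh (z * x ^ 2)) x := by
  by_cases hz : z = 0
  · subst hz
    simpa [shc] using hasDerivAt_pow 2 x
  · have hsinh : (fun t => t ^ 2 * shc (z * t ^ 2)) = fun t => sinh (z * t ^ 2) / z := by
      funext t
      rw [← mul_shc, mul_assoc, mul_div_cancel_left₀ _ hz]
    rw [hsinh]
    refine ((((hasDerivAt_pow 2 x).const_mul z).sinh).div_const z).congr_deriv ?_
    field_simp
    ring

section

variable (z : ℝ) {x : ℝ}

lemma hasDerivAt_shc_const_mul_sq (hx : x ≠ 0) :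
    HasDerivAt (fun t => shc (z * t ^ 2)) (2 * (cosh (z * x ^ 2) - shc (z * x ^ 2)) / x) x := by
  have hquot : HasDerivAt (fun t => t ^ 2 * shc (z * t ^ 2) / t ^ 2)
      ((2 * x * cosh (z * x ^ 2) * x ^ 2 - x ^ 2 * shc (z * x ^ 2) * (2 * x ^ 1)) /
        (x ^ 2) ^ 2) x :=
    (hasDerivAt_sq_mul_shc_const_mul_sq z x).div (hasDerivAt_pow 2 x) (pow_ne_zero 2 hx)
  have heq : (fun t => shc (z * t ^ 2)) =ᶠ[𝓝 x] fun t => t ^ 2 * shc (z * t ^ 2) / t ^ 2 := by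
    filter_upwards [eventually_ne_nhds hx] with t ht
    field_simp
  refine (hquot.congr_of_eventuallyEq heq).congr_deriv ?_
  field_simp

lemma hasDerivAt_mul_shc_const_mul_sq (hx : x ≠ 0) :
    HasDerivAt (fun t => t * shc (z * t ^ 2)) (2 * cosh (z * x ^ 2) - shc (z * x ^ 2)) x := by
  refine ((hasDerivAt_id' x).mul (hasDerivAt_shc_const_mul_sq z hx)).congr_deriv ?_
  field_simp
  ring

end

lemma pbracket_eq_of_hasDerivAt {f g : ℝ → ℝ → ℝ} {x y fx fy gx gy : ℝ}
    (hfx : HasDerivAt (fun x' => f x' y) fx x) (hfy : HasDerivAt (f x) fy y)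
    (hgx : HasDerivAt (fun x' => g x' y) gx x) (hgy : HasDerivAt (g x) gy y) :
    pbracket f g x y = fx * gy - fy * gx := by
  rw [pbracket, hfx.deriv, hfy.deriv, hgx.deriv, hgy.deriv]

noncomputable def deformedH₁ (x _ : ℝ) : ℝ := x ^ 2 / 2

noncomputable def deformedH₂ (z x y : ℝ) : ℝ := -(1 / 2) * shc (z * x ^ 2) * x * y

noncomputable def deformedH₃ (z c x y : ℝ) : ℝ :=
  (1 / 2) * (shc (z * x ^ 2) * y ^ 2 + c / (x ^ 2 * shc (z * x ^ 2)))

lemma pbracket_deformedH₁ (g : ℝ → ℝ → ℝ) (x y : ℝ) :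
    pbracket deformedH₁ g x y = x * deriv (g x) y := by
  simp [pbracket, deformedH₁]

section

variable (z c : ℝ) {x : ℝ} (y : ℝ)

lemma hasDerivAt_deformedH₂_fst (hx : x ≠ 0) :
    HasDerivAt (fun t => deformedH₂ z t y)
      (-(1 / 2) * (2 * cosh (z * x ^ 2) - shc (z * x ^ 2)) * y) x := by
  refine (((hasDerivAt_mul_shc_const_mul_sq z hx).const_mul (-(1 / 2) : ℝ)).mul_const
    y).congr_of_eventuallyEq (Eventually.of_forall fun t => ?_)
  simp only [deformedH₂]
  ring

lemma hasDerivAt_deformedH₂_snd :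
    HasDerivAt (deformedH₂ z x) (-(1 / 2) * shc (z * x ^ 2) * x) y :=
  ((hasDerivAt_id' y).const_mul _).congr_deriv (mul_one _)

lemma hasDerivAt_deformedH₃_fst (hx : x ≠ 0) :
    HasDerivAt (fun t => deformedH₃ z c t y)
      ((2 * (cosh (z * x ^ 2) - shc (z * x ^ 2)) / x * y ^ 2 -
        c * (2 * x * cosh (z * x ^ 2)) / (x ^ 2 * shc (z * x ^ 2)) ^ 2) / 2) x := by
  have hne : x ^ 2 * shc (z * x ^ 2) ≠ 0 := by
    have := shc_pos (z * x ^ 2)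
    positivity
  refine ((((hasDerivAt_shc_const_mul_sq z hx).mul_const (y ^ 2)).add ((hasDerivAt_const x c).div
    (hasDerivAt_sq_mul_shc_const_mul_sq z x) hne)).const_mul (1 / 2 : ℝ)).congr_deriv ?_
  ring

lemma hasDerivAt_deformedH₃_snd :
    HasDerivAt (deformedH₃ z c x) (shc (z * x ^ 2) * y) y := by
  refine ((((hasDerivAt_pow 2 y).const_mul (shc (z * x ^ 2))).add_const
    (c / (x ^ 2 * shc (z * x ^ 2)))).const_mul (1 / 2 : ℝ)).congr_deriv ?_
  push_cast
  ring

lemma pbracket_deformedH₁_deformedH₂ :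
    pbracket deformedH₁ (deformedH₂ z) x y = -(shc (z * x ^ 2) * deformedH₁ x y) := by
  rw [pbracket_deformedH₁, (hasDerivAt_deformedH₂_snd z y).deriv, deformedH₁]
  ring

lemma pbracket_deformedH₁_deformedH₃ :
    pbracket deformedH₁ (deformedH₃ z c) x y = -2 * deformedH₂ z x y := by
  rw [pbracket_deformedH₁, (hasDerivAt_deformedH₃_snd z c y).deriv, deformedH₂]
  ring

lemma pbracket_deformedH₂_deformedH₃ (hx : x ≠ 0) :
    pbracket (deformedH₂ z) (deformedH₃ z c) x y =
      -(cosh (z * x ^ 2) * deformedH₃ z c x y) := by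
  have hS := shc_pos (z * x ^ 2)
  rw [pbracket_eq_of_hasDerivAt (hasDerivAt_deformedH₂_fst z y hx)
    (hasDerivAt_deformedH₂_snd z y) (hasDerivAt_deformedH₃_fst z c y hx) (hasDerivAt_deformedH₃_snd z c y), deformedH₃]
  field_simp
  ring

end

theorem deformed_mp_brackets_general (z c : ℝ)
    (h₁ h₂ h₃ : ℝ → ℝ → ℝ)
    (H1 : ∀ x y : ℝ, h₁ x y = x ^ 2 / 2)
    (H2 : ∀ x y : ℝ, h₂ x y = -(1 / 2) * shc (z * x ^ 2) * x * y)
    (H3 : ∀ x y : ℝ, h₃ x y =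
      (1 / 2) * (shc (z * x ^ 2) * y ^ 2 + c / (x ^ 2 * shc (z * x ^ 2)))) :
    ∀ x y : ℝ, x ≠ 0 →
      pbracket h₁ h₂ x y = -(shc (2 * z * h₁ x y) * h₁ x y) ∧
      pbracket h₁ h₃ x y = -2 * h₂ x y ∧
      pbracket h₂ h₃ x y = -(Real.cosh (2 * z * h₁ x y) * h₃ x y) := by
  obtain rfl : h₁ = deformedH₁ := funext₂ H1
  obtain rfl : h₂ = deformedH₂ z := funext₂ H2
  obtain rfl : h₃ = deformedH₃ z c := funext₂ H3
  intro x y hx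
  have harg : 2 * z * deformedH₁ x y = z * x ^ 2 := by
    rw [deformedH₁]
    ring
  rw [harg]
  exact ⟨pbracket_deformedH₁_deformedH₂ z y, pbracket_deformedH₁_deformedH₃ z c y,
    pbracket_deformedH₂_deformedH₃ z c y hx⟩

theorem deformed_mp_brackets (z c : ℝ) (hz : z ≠ 0)
    (h₁ h₂ h₃ : ℝ → ℝ → ℝ)
    (H1 : ∀ x y : ℝ, h₁ x y = x ^ 2 / 2)
    (H2 : ∀ x y : ℝ, h₂ x y = -(1 / 2) * shc (z * x ^ 2) * x * y)
    (H3 : ∀ x y : ℝ, h₃ x y =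
      (1 / 2) * (shc (z * x ^ 2) * y ^ 2 + c / (x ^ 2 * shc (z * x ^ 2)))) :
    ∀ x y : ℝ, x ≠ 0 →
      pbracket h₁ h₂ x y = -(shc (2 * z * h₁ x y) * h₁ x y) ∧
      pbracket h₁ h₃ x y = -2 * h₂ x y ∧
      pbracket h₂ h₃ x y = -(Real.cosh (2 * z * h₁ x y) * h₃ x y) :=
  deformed_mp_brackets_general z c h₁ h₂ h₃ H1 H2 H3
end

section
/- With the deformed Hamiltonians h_{z,1} = x²/2, h_{z,2} = −(1/2)·shc(zx²)·xy, h_{z,3} = (1/2)(shc(zx²)·y² + c/(x²·shc(zx²))), the deformed Casimir shc(2z·h_{z,1})·h_{z,1}·h_{z,3} − h_{z,2}² equals the constant c/4 on ℝ²_{x≠0}. -/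
lemma shc_ne_zero (u : ℝ) : shc u ≠ 0 := by
  unfold shc
  rcases eq_or_ne u 0 with h | h
  · simp [h]
  · simp only [h, if_false]
    rcases lt_or_gt_of_ne h with hl | hg
    · exact ne_of_gt (div_pos_of_neg_of_neg (Real.sinh_neg_iff.2 hl) hl)
    · exact ne_of_gt (div_pos (Real.sinh_pos_iff.2 hg) hg)

theorem deformed_mp_casimir (z c x y : ℝ) (hx : x ≠ 0) :
    shc (2 * z * (x ^ 2 / 2)) * (x ^ 2 / 2) *
        ((1 / 2) * (shc (z * x ^ 2) * y ^ 2 + c / (x ^ 2 * shc (z * x ^ 2)))) -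
      (-(1 / 2) * shc (z * x ^ 2) * x * y) ^ 2 = c / 4 := by
  have he : 2 * z * (x ^ 2 / 2) = z * x ^ 2 := by ring
  rw [he]
  have hs := shc_ne_zero (z * x ^ 2)
  field_simp
  ring
end

section
/- The functions h₁ = 1/(u−v), h₂ = (1/2)(u+v)/(u−v), h₃ = uv/(u−v) on ℝ²_{u≠v} satisfy {h₁,h₂}_ω = −h₁, {h₁,h₃}_ω = −2h₂, {h₂,h₃}_ω = −h₃, where {f,g}_ω = (u−v)²(f_u g_v − f_v g_u) is the Poisson bracket induced by ω = (du∧dv)/(u−v)², and moreover h₁h₃ − h₂² = −1/4. -/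
/-! In each variable separately every `hᵢ` is a Möbius function `(a x + b) / (x - c)`, whose
derivative is its determinant over the squared denominator; once the partial derivatives are
known, each bracket and the Casimir identity are identities of rational functions. -/

/-- Poisson bracket induced by ω = (du∧dv)/(u−v)². -/
noncomputable def pbracket2R (f g : ℝ → ℝ → ℝ) (u v : ℝ) : ℝ :=
  (u - v) ^ 2 * (deriv (fun u' => f u' v) u * deriv (fun v' => g u v') v -
    deriv (fun v' => f u v') v * deriv (fun u' => g u' v) u)

theorem hasDerivAt_mobius (a b c d x : ℝ) (hx : c * x + d ≠ 0) :
    HasDerivAt (fun y => (a * y + b) / (c * y + d)) ((a * d - b * c) / (c * x + d) ^ 2) x := by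
  have hnum : HasDerivAt (fun y => a * y + b) a x :=
    (((hasDerivAt_id' x).const_mul a).add_const b).congr_deriv (mul_one a)
  have hden : HasDerivAt (fun y => c * y + d) c x :=
    (((hasDerivAt_id' x).const_mul c).add_const d).congr_deriv (mul_one c)
  exact (hnum.fun_div hden hx).congr_deriv (by ring)

theorem hasDerivAt_affine_div_sub_left {f : ℝ → ℝ} {u v : ℝ} (a b : ℝ)
    (hf : ∀ x, f x = (a * x + b) / (x - v)) (h : u - v ≠ 0) :
    HasDerivAt f (-(a * v + b) / (u - v) ^ 2) u := by
  have hmob := hasDerivAt_mobius a b 1 (-v) u (by rwa [one_mul, ← sub_eq_add_neg])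
  simp only [one_mul, ← sub_eq_add_neg] at hmob
  rw [funext hf]
  exact hmob.congr_deriv (by ring)

theorem hasDerivAt_affine_div_sub_right {f : ℝ → ℝ} {u v : ℝ} (a b : ℝ)
    (hf : ∀ y, f y = (a * y + b) / (u - y)) (h : u - v ≠ 0) :
    HasDerivAt f ((a * u + b) / (u - v) ^ 2) v := by
  have hmob := hasDerivAt_mobius a b (-1) u v (by rwa [neg_one_mul, neg_add_eq_sub])
  simp only [neg_one_mul, neg_add_eq_sub] at hmob
  rw [funext hf]
  exact hmob.congr_deriv (by ring)

theorem pbracket2R_eq_of_hasDerivAt {f g : ℝ → ℝ → ℝ} {u v fu fv gu gv : ℝ}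
    (hfu : HasDerivAt (fun u' => f u' v) fu u) (hfv : HasDerivAt (fun v' => f u v') fv v)
    (hgu : HasDerivAt (fun u' => g u' v) gu u) (hgv : HasDerivAt (fun v' => g u v') gv v) :
    pbracket2R f g u v = (u - v) ^ 2 * (fu * gv - fv * gu) := by
  rw [pbracket2R, hfu.deriv, hfv.deriv, hgu.deriv, hgv.deriv]

theorem coupled_riccati_lh_brackets
    (h₁ h₂ h₃ : ℝ → ℝ → ℝ)
    (H1 : ∀ u v : ℝ, h₁ u v = 1 / (u - v))
    (H2 : ∀ u v : ℝ, h₂ u v = (1 / 2) * ((u + v) / (u - v)))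
    (H3 : ∀ u v : ℝ, h₃ u v = u * v / (u - v)) :
    ∀ u v : ℝ, u ≠ v →
      pbracket2R h₁ h₂ u v = -h₁ u v ∧
      pbracket2R h₁ h₃ u v = -2 * h₂ u v ∧
      pbracket2R h₂ h₃ u v = -h₃ u v ∧
      h₁ u v * h₃ u v - (h₂ u v) ^ 2 = -(1 / 4) := by
  intro u v huv
  have hne : u - v ≠ 0 := sub_ne_zero.mpr huv
  have h₁u := hasDerivAt_affine_div_sub_left (f := (h₁ · v)) 0 1 (by intro; rw [H1]; ring) hne
  have h₁v := hasDerivAt_affine_div_sub_right (f := (h₁ u ·)) 0 1 (by intro; rw [H1]; ring) hne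
  have h₂u := hasDerivAt_affine_div_sub_left (f := (h₂ · v)) (1 / 2) (v / 2)
    (by intro; rw [H2]; ring) hne
  have h₂v := hasDerivAt_affine_div_sub_right (f := (h₂ u ·)) (1 / 2) (u / 2)
    (by intro; rw [H2]; ring) hne
  have h₃u := hasDerivAt_affine_div_sub_left (f := (h₃ · v)) v 0 (by intro; rw [H3]; ring) hne
  have h₃v := hasDerivAt_affine_div_sub_right (f := (h₃ u ·)) u 0 (by intro; rw [H3]; ring) hne
  rw [pbracket2R_eq_of_hasDerivAt h₁u h₁v h₂u h₂v, pbracket2R_eq_of_hasDerivAt h₁u h₁v h₃u h₃v,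
    pbracket2R_eq_of_hasDerivAt h₂u h₂v h₃u h₃v, H1, H2, H3]
  refine ⟨?_, ?_, ?_, ?_⟩ <;> field_simp <;> ring
end
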